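/- arXiv:2201.01314 — 2 statements merged into one kernel-verified Lean document; each statement's English description precedes it below -/
import Mathlib

section
/- Let $a_1, \dots, a_m$ be distinct points in the open upper half-plane and let $\alpha_1, \dots, \alpha_m \in \mathbb{C}$ satisfy the transposed Vandermonde system $\sum_{j=1}^m \alpha_j a_j^k = \delta_{k,0}$ for $0 \le k \le m-1$. Then the function $K(x) = \frac{1}{2\pi i}\sum_{j=1}^m \left( \frac{\alpha_j}{x - a_j} - \frac{\overline{\alpha_j}}{x - \overline{a_j}} \right)$ is real-valued on $\mathbb{R}$ and satisfies $\int_{\mathbb{R}} K(x)\, dx = 1$. -/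
/-!
With `S(x) = ∑ⱼ αⱼ / (x - aⱼ)` the kernel is `K = Im S / π`, hence real. Since `∑ⱼ αⱼ = 1`,
`S(x) = ∑ⱼ αⱼ ((x - aⱼ)⁻¹ - (x - i)⁻¹) + (x - i)⁻¹`. Each bracket is `O(x⁻²)` and has the
antiderivative `log ((x - aⱼ) / (x - i))`, which tends to `0` at both ends (both points lie in
the upper half-plane, so the quotient never meets the branch cut); hence it integrates to `0`,
while `Im (x - i)⁻¹ = (1 + x²)⁻¹` integrates to `π`.
-/

open MeasureTheory Complex

/-- The complex-valued rational kernel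
`K(x) = (2πi)⁻¹ ∑ⱼ (αⱼ/(x - aⱼ) - conj αⱼ/(x - conj aⱼ))`. -/
noncomputable def ratKernelC (m : ℕ) (a α : Fin m → ℂ) (x : ℝ) : ℂ :=
  (2 * (Real.pi : ℂ) * Complex.I)⁻¹ *
    ∑ j, (α j / ((x : ℂ) - a j) -
      (starRingEnd ℂ) (α j) / ((x : ℂ) - (starRingEnd ℂ) (a j)))

open Filter Bornology
open scoped Real Topology ComplexConjugate

namespace RatKernel

lemma im_le_norm_ofReal_sub (z : ℂ) (x : ℝ) : z.im ≤ ‖(x : ℂ) - z‖ :=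
  (le_abs_self _).trans (by simpa using abs_im_le_norm ((x : ℂ) - z))

lemma ofReal_sub_ne_zero {z : ℂ} (hz : 0 < z.im) (x : ℝ) : (x : ℂ) - z ≠ 0 :=
  norm_pos_iff.mp (hz.trans_le (im_le_norm_ofReal_sub z x))

lemma norm_inv_ofReal_sub_le {z : ℂ} (hz : 0 < z.im) (x : ℝ) :
    ‖((x : ℂ) - z)⁻¹‖ ≤ (1 + ‖z - I‖ / z.im) * ‖((x : ℂ) - I)⁻¹‖ := by
  have hxz := norm_pos_iff.mpr (ofReal_sub_ne_zero hz x)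
  have hxI := norm_pos_iff.mpr (ofReal_sub_ne_zero (z := I) one_pos x)
  have hshift : ‖z - I‖ ≤ ‖z - I‖ / z.im * ‖(x : ℂ) - z‖ := by
    rw [div_mul_comm]
    exact le_mul_of_one_le_left (norm_nonneg _) ((one_le_div hz).2 (im_le_norm_ofReal_sub z x))
  have htri : ‖(x : ℂ) - I‖ ≤ ‖(x : ℂ) - z‖ + ‖z - I‖ := by
    simpa using norm_add_le ((x : ℂ) - z) (z - I)
  rw [norm_inv, norm_inv, ← div_eq_mul_inv, le_div_iff₀ hxI, inv_mul_le_iff₀ hxz]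
  linarith

lemma norm_inv_ofReal_sub_I_sq (x : ℝ) : ‖((x : ℂ) - I)⁻¹‖ ^ 2 = (1 + x ^ 2)⁻¹ := by
  rw [norm_inv, inv_pow, Complex.sq_norm, normSq_apply]
  simp [add_comm, sq]

lemma integrable_inv_sub_sub_inv_sub {a b : ℂ} (ha : 0 < a.im) (hb : 0 < b.im) :
    Integrable fun x : ℝ => ((x : ℂ) - a)⁻¹ - ((x : ℂ) - b)⁻¹ := by
  have hcont (z : ℂ) (hz : 0 < z.im) : Continuous fun x : ℝ => ((x : ℂ) - z)⁻¹ :=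
    (continuous_ofReal.sub continuous_const).inv₀ (ofReal_sub_ne_zero hz)
  set Ca := 1 + ‖a - I‖ / a.im
  set Cb := 1 + ‖b - I‖ / b.im
  refine (integrable_inv_one_add_sq.const_mul (‖a - b‖ * (Ca * Cb))).mono'
    ((hcont a ha).sub (hcont b hb)).aestronglyMeasurable (Eventually.of_forall fun x => ?_)
  rw [inv_sub_inv' (ofReal_sub_ne_zero ha x) (ofReal_sub_ne_zero hb x),
    sub_sub_sub_cancel_left, ← norm_inv_ofReal_sub_I_sq x]
  calc ‖((x : ℂ) - a)⁻¹ * (a - b) * ((x : ℂ) - b)⁻¹‖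
      = ‖a - b‖ * (‖((x : ℂ) - a)⁻¹‖ * ‖((x : ℂ) - b)⁻¹‖) := by
        rw [norm_mul, norm_mul]; ring
    _ ≤ ‖a - b‖ * ((Ca * ‖((x : ℂ) - I)⁻¹‖) * (Cb * ‖((x : ℂ) - I)⁻¹‖)) := by
        gcongr
        exacts [norm_inv_ofReal_sub_le ha x, norm_inv_ofReal_sub_le hb x]
    _ = ‖a - b‖ * (Ca * Cb) * ‖((x : ℂ) - I)⁻¹‖ ^ 2 := by ring

lemma div_mem_slitPlane {a b : ℂ} (ha : 0 < a.im) (hb : 0 < b.im) (x : ℝ) :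
    ((x : ℂ) - a) / ((x : ℂ) - b) ∈ slitPlane := by
  rw [mem_slitPlane_iff, or_iff_not_imp_right, not_not]
  -- a real quotient `w` would satisfy `a.im = w * b.im` (imaginary part of `x - a = w (x - b)`)
  intro hw
  have him := congrArg im (div_mul_cancel₀ ((x : ℂ) - a) (ofReal_sub_ne_zero hb x))
  rw [mul_im, hw, zero_mul, add_zero] at him
  simp only [sub_im, ofReal_im, zero_sub, mul_neg, neg_inj] at him
  nlinarith

lemma hasDerivAt_log_div_sub {a b : ℂ} (ha : 0 < a.im) (hb : 0 < b.im) (x : ℝ) :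
    HasDerivAt (fun t : ℝ => log (((t : ℂ) - a) / ((t : ℂ) - b)))
      (((x : ℂ) - a)⁻¹ - ((x : ℂ) - b)⁻¹) x := by
  have hid : HasDerivAt (fun t : ℝ => (t : ℂ)) 1 x := ofRealCLM.hasDerivAt
  refine (((hid.sub_const a).div (hid.sub_const b) (ofReal_sub_ne_zero hb x)).clog_real
    (div_mem_slitPlane ha hb x)).congr_deriv ?_
  have := ofReal_sub_ne_zero ha x
  have := ofReal_sub_ne_zero hb x
  rw [Pi.div_apply]
  field_simp

lemma tendsto_log_div_sub_cobounded (a b : ℂ) :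
    Tendsto (fun z : ℂ => log ((z - a) / (z - b))) (cobounded ℂ) (𝓝 0) := by
  have hratio : Tendsto (fun z : ℂ => 1 + (b - a) * (z - b)⁻¹) (cobounded ℂ) (𝓝 1) := by
    simpa using tendsto_const_nhds.add (tendsto_const_nhds.mul
      (tendsto_inv₀_cobounded.comp (tendsto_sub_const_cobounded b)))
  rw [← log_one]
  refine (hratio.congr' ?_).clog one_mem_slitPlane
  filter_upwards [eventually_ne_cobounded b] with z hz
  have := sub_ne_zero.mpr hz
  field_simp
  ring

theorem integral_inv_sub_sub_inv_sub {a b : ℂ} (ha : 0 < a.im) (hb : 0 < b.im) :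
    ∫ x : ℝ, (((x : ℂ) - a)⁻¹ - ((x : ℂ) - b)⁻¹) = 0 := by
  have hlim := tendsto_log_div_sub_cobounded a b
  simpa using integral_of_hasDerivAt_of_tendsto (hasDerivAt_log_div_sub ha hb)
    (integrable_inv_sub_sub_inv_sub ha hb)
    (hlim.comp (RCLike.tendsto_ofReal_atBot_cobounded ℂ))
    (hlim.comp (RCLike.tendsto_ofReal_atTop_cobounded ℂ))

theorem integral_im_sum_div_sub {ι : Type*} [Fintype ι] (a α : ι → ℂ)
    (ha : ∀ j, 0 < (a j).im) (hα : ∑ j, α j = 1) :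
    ∫ x : ℝ, (∑ j, α j / ((x : ℂ) - a j)).im = π := by
  have hI : 0 < I.im := by simp
  set Φ : ℝ → ℂ := fun x => ∑ j, α j * (((x : ℂ) - a j)⁻¹ - ((x : ℂ) - I)⁻¹)
  have hterm (j : ι) : Integrable fun x : ℝ => α j * (((x : ℂ) - a j)⁻¹ - ((x : ℂ) - I)⁻¹) :=
    (integrable_inv_sub_sub_inv_sub (ha j) hI).const_mul _
  have hΦ : Integrable Φ := integrable_finsetSum _ fun j _ => hterm j
  have hΦ_im : Integrable fun x => (Φ x).im := hΦ.im
  have hΦ_zero : ∫ x, Φ x = 0 := by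
    rw [integral_finsetSum _ fun j _ => hterm j]
    simp [integral_const_mul, integral_inv_sub_sub_inv_sub (ha _) hI]
  have hsplit (x : ℝ) : (∑ j, α j / ((x : ℂ) - a j)).im = (Φ x).im + (1 + x ^ 2)⁻¹ := by
    have : ∑ j, α j / ((x : ℂ) - a j) = Φ x + ((x : ℂ) - I)⁻¹ := by
      simp only [Φ, mul_sub, Finset.sum_sub_distrib, ← Finset.sum_mul, hα, div_eq_mul_inv]
      ring
    rw [this, add_im, inv_im, normSq_apply]
    simp [add_comm, sq]
  calc ∫ x : ℝ, (∑ j, α j / ((x : ℂ) - a j)).im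
      = ∫ x : ℝ, ((Φ x).im + (1 + x ^ 2)⁻¹) := integral_congr_ae (Eventually.of_forall hsplit)
    _ = (∫ x, Φ x).im + π := by
        rw [integral_add hΦ_im integrable_inv_one_add_sq, integral_univ_inv_one_add_sq]
        congr 1
        exact integral_im hΦ
    _ = π := by rw [hΦ_zero, zero_im, zero_add]

lemma two_pi_I_inv_mul_sub_conj (z : ℂ) : (2 * π * I)⁻¹ * (z - conj z) = ((z.im / π : ℝ) : ℂ) := by
  rw [sub_conj]
  push_cast
  field_simp

lemma ratKernelC_eq_ofReal (m : ℕ) (a α : Fin m → ℂ) (x : ℝ) :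
    ratKernelC m a α x = (((∑ j, α j / ((x : ℂ) - a j)).im / π : ℝ) : ℂ) := by
  rw [ratKernelC, ← two_pi_I_inv_mul_sub_conj, Finset.sum_sub_distrib]
  simp only [map_sum, map_div₀, map_sub, conj_ofReal]

end RatKernel

open RatKernel

theorem ratKernel_real_and_unit_mass_general
    (m : ℕ) (hm : 0 < m) (a α : Fin m → ℂ)
    (ha : ∀ j, 0 < (a j).im)
    (hvand : ∀ k : ℕ, k < m → ∑ j, α j * a j ^ k = if k = 0 then 1 else 0) :
    (∀ x : ℝ, (ratKernelC m a α x).im = 0) ∧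
      ∫ x : ℝ, (ratKernelC m a α x).re = 1 := by
  have hα : ∑ j, α j = 1 := by simpa using hvand 0 hm
  refine ⟨fun x => by rw [ratKernelC_eq_ofReal, ofReal_im], ?_⟩
  simp only [ratKernelC_eq_ofReal, ofReal_re]
  rw [integral_div, integral_im_sum_div_sub a α ha hα, div_self Real.pi_ne_zero]

/-- If `a₁, …, a_m` are distinct points in the open upper half-plane and
`α₁, …, α_m` solve the transposed Vandermonde system `∑ⱼ αⱼ aⱼᵏ = δ_{k,0}` for
`0 ≤ k ≤ m - 1`, then the kernel `K` is real-valued on `ℝ` and `∫_ℝ K(x) dx = 1`. -/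
theorem ratKernel_real_and_unit_mass
    (m : ℕ) (hm : 0 < m) (a α : Fin m → ℂ)
    (ha : ∀ j, 0 < (a j).im) (hinj : Function.Injective a)
    (hvand : ∀ k : ℕ, k < m → ∑ j, α j * a j ^ k = if k = 0 then 1 else 0) :
    (∀ x : ℝ, (ratKernelC m a α x).im = 0) ∧
      ∫ x : ℝ, (ratKernelC m a α x).re = 1 :=
  ratKernel_real_and_unit_mass_general m hm a α ha hvand
end

section
/- Let $\mathcal{H}_{\mathcal{B}}$ be the Hilbert space completion of $\mathcal{D}(\mathcal{B}^{1/2})$ under the norm $\|f\|_{\mathcal{B}} = \|\mathcal{B}^{1/2}f\|$, let $\mathcal{L}$ be the closure in $\mathcal{H}_{\mathcal{B}}$ of $\mathcal{B}^{-1}\mathcal{A}$ restricted to $\mathcal{D}(\mathcal{A}) \cap \mathcal{D}(\mathcal{B}^{1/2})$, and let $\mathcal{T}(z)$ be the closure of $(\mathcal{A} - z\mathcal{B})|_{\mathcal{D}(\mathcal{A})\cap\mathcal{D}(\mathcal{B}^{1/2})}$ as an operator from $\mathcal{H}_{\mathcal{B}}$ to $\mathcal{H}_{\mathcal{B}^{-1}}$.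 Then for every $z \in \mathbb{C}$: $\mathcal{D}(\mathcal{T}(z)) = \mathcal{D}(\mathcal{L})$ and $\mathcal{T}(z) = \mathcal{B}(\mathcal{L} - z)$, where $\mathcal{B}$ is extended to an isometric isomorphism $\mathcal{H}_{\mathcal{B}} \to \mathcal{H}_{\mathcal{B}^{-1}}$. -/
open Complex

/-- The continuous linear equivalence `(u, v) ↦ (u, B (v - z • u))` on graph spaces. -/
noncomputable def pencilGraphEquiv
    {HB HBinv : Type*} [NormedAddCommGroup HB] [InnerProductSpace ℂ HB]
    [NormedAddCommGroup HBinv] [InnerProductSpace ℂ HBinv]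
    (B : HB ≃ₗᵢ[ℂ] HBinv) (z : ℂ) : (HB × HB) ≃L[ℂ] (HB × HBinv) where
  toFun p := (p.1, B (p.2 - z • p.1))
  invFun p := (p.1, B.symm p.2 + z • p.1)
  map_add' p q := by
    simp only [Prod.fst_add, Prod.snd_add, Prod.mk_add_mk]
    refine Prod.ext rfl ?_
    rw [← map_add]
    congr 1
    rw [smul_add]
    abel_nf
  map_smul' c p := by
    simp only [Prod.smul_fst, Prod.smul_snd, Prod.smul_mk, RingHom.id_apply]
    refine Prod.ext rfl ?_
    rw [← map_smul]
    congr 1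
    rw [smul_sub, smul_comm]
  left_inv p := by simp
  right_inv p := by simp
  continuous_toFun :=
    continuous_fst.prodMk
      (B.continuous.comp (continuous_snd.sub (continuous_fst.const_smul z)))
  continuous_invFun :=
    continuous_fst.prodMk
      ((B.symm.continuous.comp continuous_snd).add (continuous_fst.const_smul z))

theorem pencilGraphEquiv_apply
    {HB HBinv : Type*} [NormedAddCommGroup HB] [InnerProductSpace ℂ HB]
    [NormedAddCommGroup HBinv] [InnerProductSpace ℂ HBinv]
    (B : HB ≃ₗᵢ[ℂ] HBinv) (z : ℂ) (p : HB × HB) :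
    pencilGraphEquiv B z p = (p.1, B (p.2 - z • p.1)) := rfl

/-- **Proposition 1, first part.** Let `𝓛` be the closure (in `𝓗_𝓑`) of
`𝓑⁻¹𝓐|_{D(𝓐)∩D(𝓑^{1/2})}` and `𝓣(z)` the closure (from `𝓗_𝓑` to `𝓗_{𝓑⁻¹}`) of
`(𝓐 - z𝓑)|_{D(𝓐)∩D(𝓑^{1/2})}`, where `𝓑` extends to an isometric isomorphism
`B : 𝓗_𝓑 → 𝓗_{𝓑⁻¹}` and on the common core `𝓣₀(z) = B ∘ (𝓛₀ - z)`.
Then for every `z ∈ ℂ`: `D(𝓣(z)) = D(𝓛)` and `𝓣(z) = B(𝓛 - z)`. -/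
theorem pencil_T_eq_B_L_sub_z
    {HB HBinv : Type*} [NormedAddCommGroup HB] [InnerProductSpace ℂ HB]
    [CompleteSpace HB] [NormedAddCommGroup HBinv] [InnerProductSpace ℂ HBinv]
    [CompleteSpace HBinv]
    (B : HB ≃ₗᵢ[ℂ] HBinv)
    (L0 : HB →ₗ.[ℂ] HB) (T0 : ℂ → (HB →ₗ.[ℂ] HBinv))
    (hdom : ∀ z, (T0 z).domain = L0.domain)
    (happ : ∀ z, ∀ u : (T0 z).domain, ∀ hu : (u : HB) ∈ L0.domain,
      (T0 z) u = B (L0 ⟨(u : HB), hu⟩ - z • (u : HB)))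
    (hL0 : L0.IsClosable) (hT0 : ∀ z, (T0 z).IsClosable) (z : ℂ) :
    (T0 z).closure.domain = L0.closure.domain ∧
      ∀ u : (T0 z).closure.domain, ∀ hu : (u : HB) ∈ L0.closure.domain,
        (T0 z).closure u = B (L0.closure ⟨(u : HB), hu⟩ - z • (u : HB)) := by
  set Φ := pencilGraphEquiv B z with hΦ
  -- graph of T0 z is the image of the graph of L0 under Φ
  have hgraph : ((T0 z).graph : Set (HB × HBinv)) = Φ '' (L0.graph : Set (HB × HB)) := by
    ext ⟨x, y⟩
    constructor
    · intro hxy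
      rw [SetLike.mem_coe, LinearPMap.mem_graph_iff] at hxy
      obtain ⟨u, hx, hy⟩ := hxy
      have hu : (u : HB) ∈ L0.domain := by rw [← hdom z]; exact u.2
      refine ⟨((u : HB), L0 ⟨(u : HB), hu⟩), L0.mem_graph ⟨(u : HB), hu⟩, ?_⟩
      dsimp only at hx hy
      simp only [hΦ, pencilGraphEquiv_apply]
      rw [← hx, ← hy, happ z u hu]
    · rintro ⟨⟨a, b⟩, hab, heq⟩
      rw [SetLike.mem_coe, LinearPMap.mem_graph_iff] at hab
      obtain ⟨v, hva, hvb⟩ := hab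
      dsimp only at hva hvb
      subst hva hvb
      simp only [hΦ, pencilGraphEquiv_apply, Prod.mk.injEq] at heq
      rw [SetLike.mem_coe, LinearPMap.mem_graph_iff]
      have hvT : (v : HB) ∈ (T0 z).domain := by rw [hdom z]; exact v.2
      refine ⟨⟨(v : HB), hvT⟩, heq.1, ?_⟩
      rw [← heq.2, happ z ⟨(v : HB), hvT⟩ v.2]
  -- closure graph equality
  have hclos : ((T0 z).closure.graph : Set (HB × HBinv))
      = Φ '' (L0.closure.graph : Set (HB × HB)) := by
    rw [← (hT0 z).graph_closure_eq_closure_graph, ← hL0.graph_closure_eq_closure_graph,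
      Submodule.topologicalClosure_coe, Submodule.topologicalClosure_coe, hgraph,
      ← ContinuousLinearEquiv.coe_toHomeomorph, (Φ.toHomeomorph.image_closure _).symm]
  -- extract domain equality
  have hd : (T0 z).closure.domain = L0.closure.domain := by
    ext x
    rw [LinearPMap.mem_domain_iff, LinearPMap.mem_domain_iff]
    constructor
    · rintro ⟨y, hy⟩
      have hy' : ((x, y) : HB × HBinv) ∈ Φ '' (L0.closure.graph : Set (HB × HB)) := by
        rw [← hclos]; exact hy
      obtain ⟨⟨a, b⟩, hab, heq⟩ := hy'
      simp only [hΦ, pencilGraphEquiv_apply, Prod.mk.injEq] at heq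
      exact ⟨b, heq.1 ▸ hab⟩
    · rintro ⟨y, hy⟩
      refine ⟨B (y - z • x), ?_⟩
      have : ((x, B (y - z • x)) : HB × HBinv)
          ∈ ((T0 z).closure.graph : Set (HB × HBinv)) := by
        rw [hclos]
        exact ⟨(x, y), hy, rfl⟩
      exact this
  refine ⟨hd, ?_⟩
  intro u hu
  have hmem : (((u : HB), (T0 z).closure u) : HB × HBinv)
      ∈ ((T0 z).closure.graph : Set (HB × HBinv)) := (T0 z).closure.mem_graph u
  rw [hclos] at hmem
  obtain ⟨⟨a, b⟩, hab, heq⟩ := hmem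
  simp only [hΦ, pencilGraphEquiv_apply, Prod.mk.injEq] at heq
  have ha : a = (u : HB) := heq.1
  subst ha
  have hb : b = L0.closure ⟨(u : HB), hu⟩ :=
    L0.closure.mem_graph_snd_inj hab (L0.closure.mem_graph ⟨(u : HB), hu⟩) rfl
  rw [← heq.2, hb]
end
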